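/- Let f : ℝ^{n+m} → M be 1-Lipschitz into a metric space and Q₀ = [0,1]^{n+m}. Suppose for every integer K there exists k ≤ K such that the union U_k of all dyadic cubes Q ⊆ Q₀ of sidelength 2^{-k} satisfying ℋⁿ_∞(f(Q)) < δ·side(Q)ⁿ has Lebesgue measure |U_k| > 1 − δ/√n. Then ℋ^{n,m}_∞(f, Q₀) ≤ 2δ, where ℋ^{n,m}_∞(f,A) = inf Σ ℋⁿ_∞(f(Q_j))·side(Q_j)^m over partitions of A into cubes. -/

import Mathlib

open Set MeasureTheory
open scoped ENNReal

/-- The `n`-dimensional Hausdorff content of a set: the infimum of `∑ rⱼⁿ` over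
countable covers by balls of radii `rⱼ`. -/
noncomputable def hausdorffContent (n : ℕ) {X : Type*} [PseudoMetricSpace X]
    (A : Set X) : ℝ≥0∞ :=
  ⨅ (c : ℕ → X) (r : ℕ → ℝ) (_ : A ⊆ ⋃ j, Metric.ball (c j) (r j)),
    ∑' j, ENNReal.ofReal (r j ^ n)

/-- The half-open axis-parallel cube with lower corner `a` and sidelength `s`. -/
def halfOpenCube {d : ℕ} (a : Fin d → ℝ) (s : ℝ) : Set (Fin d → ℝ) :=
  {x | ∀ i, a i ≤ x i ∧ x i < a i + s}

/-- The `(n,m)`-Hausdorff content of `(f, A)`: the infimum of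
`∑ ℋⁿ_∞(f(Qⱼ))·side(Qⱼ)ᵐ` over countable measure-theoretic partitions of `A`
into disjoint cubes `Qⱼ`. -/
noncomputable def hausdorffContentNM (n m : ℕ) {M : Type*} [PseudoMetricSpace M]
    (f : (Fin (n + m) → ℝ) → M) (A : Set (Fin (n + m) → ℝ)) : ℝ≥0∞ :=
  ⨅ (a : ℕ → Fin (n + m) → ℝ) (s : ℕ → ℝ)
    (_ : ∀ j, 0 ≤ s j)
    (_ : ∀ j, halfOpenCube (a j) (s j) ⊆ A)
    (_ : Pairwise (Function.onFun Disjoint fun j => halfOpenCube (a j) (s j)))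
    (_ : volume (A \ ⋃ j, halfOpenCube (a j) (s j)) = 0),
    ∑' j, hausdorffContent n (f '' halfOpenCube (a j) (s j)) * ENNReal.ofReal (s j ^ m)

/-!
Partition `Q₀` into the `2^{k(n+m)}` dyadic cubes of side `s = 2^{-k}`. In the sup metric a
`1`-Lipschitz image of such a cube `Q` lies in a ball of radius `s`, so `ℋⁿ_∞(f(Q))·sᵐ ≤ |Q|`,
while a cube of `U_k` contributes at most `δ·|Q|`. Summing, the partition witnesses
`ℋ^{n,m}_∞(f, Q₀) ≤ δ·|U_k| + |Q₀ \ U_k| ≤ δ + δ/√n`.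
-/

lemma hausdorffContent_le_of_subset_ball {n : ℕ} {X : Type*} [PseudoMetricSpace X]
    (hn : n ≠ 0) {A : Set X} {c : X} {r : ℝ} (hA : A ⊆ Metric.ball c r) :
    hausdorffContent n A ≤ ENNReal.ofReal (r ^ n) := by
  refine iInf₂_le_of_le (fun _ => c) (fun j => if j = 0 then r else 0)
    (iInf_le_of_le (hA.trans (subset_iUnion_of_subset 0 (by simp))) ?_)
  rw [tsum_eq_single 0 fun j hj => by simp [hj, zero_pow hn]]
  simp

lemma hausdorffContent_empty {n : ℕ} {X : Type*} [PseudoMetricSpace X] [Nonempty X]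
    (hn : n ≠ 0) : hausdorffContent n (∅ : Set X) = 0 := by
  simpa [zero_pow hn] using
    hausdorffContent_le_of_subset_ball hn (empty_subset (Metric.ball (Classical.arbitrary X) 0))

section Cubes

variable {d : ℕ}

lemma halfOpenCube_eq_pi (a : Fin d → ℝ) (s : ℝ) :
    halfOpenCube a s = pi univ fun i => Ico (a i) (a i + s) := by
  ext x; simp [halfOpenCube]

lemma measurableSet_halfOpenCube (a : Fin d → ℝ) (s : ℝ) :
    MeasurableSet (halfOpenCube a s) := by
  rw [halfOpenCube_eq_pi]
  exact .univ_pi fun _ => measurableSet_Ico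

lemma volume_halfOpenCube (a : Fin d → ℝ) {s : ℝ} (hs : 0 ≤ s) :
    volume (halfOpenCube a s) = ENNReal.ofReal (s ^ d) := by
  simp [halfOpenCube_eq_pi, volume_pi_pi, ENNReal.ofReal_pow hs]

lemma halfOpenCube_zero (hd : d ≠ 0) (a : Fin d → ℝ) : halfOpenCube a 0 = ∅ := by
  simp [halfOpenCube_eq_pi, Fin.pos_iff_nonempty.1 (Nat.pos_of_ne_zero hd)]

lemma halfOpenCube_subset_Icc : halfOpenCube (0 : Fin d → ℝ) 1 ⊆ Icc 0 1 := by
  rw [halfOpenCube_eq_pi, ← pi_univ_Icc]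
  exact pi_mono fun _ _ => by simpa using Ico_subset_Icc_self

lemma volume_Icc_diff_halfOpenCube : volume (Icc 0 1 \ halfOpenCube (0 : Fin d → ℝ) 1) = 0 := by
  have h := ae_eq_set.1 (Measure.univ_pi_Ico_ae_eq_Icc (μ := fun _ : Fin d => (volume : Measure ℝ))
    (f := 0) (g := 1)) |>.2
  simpa [halfOpenCube_eq_pi, ← volume_pi] using h

lemma hausdorffContent_image_halfOpenCube_le {n : ℕ} {M : Type*} [PseudoMetricSpace M]
    {f : (Fin d → ℝ) → M} (hf : LipschitzWith 1 f) (hn : n ≠ 0) (a : Fin d → ℝ) {s : ℝ}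
    (hs : 0 < s) : hausdorffContent n (f '' halfOpenCube a s) ≤ ENNReal.ofReal (s ^ n) := by
  refine hausdorffContent_le_of_subset_ball hn (c := f a) ?_
  rintro _ ⟨y, hy, rfl⟩
  rw [Metric.mem_ball]
  refine (hf.dist_le_mul y a).trans_lt ?_
  rw [NNReal.coe_one, one_mul, dist_pi_lt_iff hs]
  intro i
  rw [Real.dist_eq, abs_lt]
  constructor <;> linarith [hy i]

lemma hausdorffContent_image_mul_le_volume {n m : ℕ} {M : Type*} [PseudoMetricSpace M]
    {f : (Fin (n + m) → ℝ) → M} (hf : LipschitzWith 1 f) (hn : n ≠ 0) (a : Fin (n + m) → ℝ)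
    {s : ℝ} (hs : 0 < s) :
    hausdorffContent n (f '' halfOpenCube a s) * ENNReal.ofReal (s ^ m)
      ≤ volume (halfOpenCube a s) := by
  rw [volume_halfOpenCube a hs.le, pow_add, ENNReal.ofReal_mul (by positivity)]
  gcongr
  exact hausdorffContent_image_halfOpenCube_le hf hn a hs

lemma hausdorffContent_mul_le_mul_volume_of_lt {n m : ℕ} {X : Type*} [PseudoMetricSpace X]
    {A : Set X} (a : Fin (n + m) → ℝ) {s δ : ℝ} (hs : 0 ≤ s)
    (hA : hausdorffContent n A < ENNReal.ofReal (δ * s ^ n)) :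
    hausdorffContent n A * ENNReal.ofReal (s ^ m)
      ≤ ENNReal.ofReal δ * volume (halfOpenCube a s) := by
  rw [volume_halfOpenCube a hs, pow_add, ENNReal.ofReal_mul' (by positivity), ← mul_assoc,
    ← ENNReal.ofReal_mul' (by positivity)]
  gcongr

end Cubes

lemma hausdorffContentNM_le_tsum {n m : ℕ} {M : Type*} [PseudoMetricSpace M] {ι : Type*}
    [Countable ι] (hn : n ≠ 0) (f : (Fin (n + m) → ℝ) → M) (A : Set (Fin (n + m) → ℝ))
    (a : ι → Fin (n + m) → ℝ) (s : ι → ℝ) (hs : ∀ i, 0 ≤ s i)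
    (hA : ∀ i, halfOpenCube (a i) (s i) ⊆ A)
    (hdisj : Pairwise (Function.onFun Disjoint fun i => halfOpenCube (a i) (s i)))
    (hcover : volume (A \ ⋃ i, halfOpenCube (a i) (s i)) = 0) :
    hausdorffContentNM n m f A
      ≤ ∑' i, hausdorffContent n (f '' halfOpenCube (a i) (s i)) * ENNReal.ofReal (s i ^ m) := by
  have : Nonempty M := ⟨f 0⟩
  obtain ⟨g, hg⟩ := Countable.exists_injective_nat ι
  -- Reindex along `g`, padding the gaps with empty cubes of side `0`.
  set a' := Function.extend g a 0
  set s' := Function.extend g s 0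
  have hs' : ∀ j, 0 ≤ s' j := fun j => by
    by_cases hj : ∃ i, g i = j
    · obtain ⟨i, rfl⟩ := hj
      simpa [s', hg.extend_apply] using hs i
    · simp [s', Function.extend_apply' _ _ _ hj]
  have hQ' : ∀ j, halfOpenCube (a' j) (s' j)
      = Function.extend g (fun i => halfOpenCube (a i) (s i)) (fun _ => ∅) j := fun j => by
    by_cases hj : ∃ i, g i = j
    · obtain ⟨i, rfl⟩ := hj
      simp only [a', s', hg.extend_apply]
    · simp only [a', s', Function.extend_apply' _ _ _ hj]
      exact halfOpenCube_zero (by omega) _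
  refine iInf_le_of_le a' <| iInf_le_of_le s' <| iInf_le_of_le hs' <| iInf_le_of_le ?_ <|
    iInf_le_of_le ?_ <| iInf_le_of_le ?_ (le_of_eq ?_)
  · intro j
    by_cases hj : ∃ i, g i = j
    · obtain ⟨i, rfl⟩ := hj
      simpa [hQ', hg.extend_apply] using hA i
    · simp [hQ', Function.extend_apply' _ _ _ hj]
  · intro j j' hjj'
    simp only [Function.onFun, hQ']
    by_cases hj : ∃ i, g i = j
    · by_cases hj' : ∃ i, g i = j'
      · obtain ⟨i, rfl⟩ := hj
        obtain ⟨i', rfl⟩ := hj'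
        simpa [hg.extend_apply] using hdisj (ne_of_apply_ne g hjj')
      · simp [Function.extend_apply' _ _ _ hj']
    · simp [Function.extend_apply' _ _ _ hj]
  · refine measure_mono_null (sdiff_subset_sdiff_right (iUnion_subset fun i => ?_)) hcover
    exact (subset_of_eq (by simp [hQ', hg.extend_apply])).trans (subset_iUnion _ (g i))
  · rw [← tsum_extend_zero hg]
    congr 1 with j
    by_cases hj : ∃ i, g i = j
    · obtain ⟨i, rfl⟩ := hj
      simp [a', s', hg.extend_apply]
    · simp [hQ', Function.extend_apply' _ _ _ hj, hausdorffContent_empty hn]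

section Dyadic

variable {d : ℕ}

-- Reducible, so that rewriting recognises the cubes as they are written in the theorem.
abbrev dyadicCube (k : ℕ) (v : Fin d → ℕ) : Set (Fin d → ℝ) :=
  halfOpenCube (fun i => (v i : ℝ) / 2 ^ k) ((1 / 2 : ℝ) ^ k)

def dyadicIndices (d k : ℕ) : Finset (Fin d → ℕ) :=
  Fintype.piFinset fun _ => Finset.range (2 ^ k)

lemma mem_dyadicCube_iff {k : ℕ} {v : Fin d → ℕ} {x : Fin d → ℝ} :
    x ∈ dyadicCube k v ↔ ∀ i, 0 ≤ x i ∧ ⌊x i * 2 ^ k⌋₊ = v i := by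
  have h2k : (0 : ℝ) < 2 ^ k := by positivity
  refine forall_congr' fun i => ?_
  rw [one_div_pow, ← add_div, div_le_iff₀ h2k, lt_div_iff₀ h2k]
  constructor
  · rintro ⟨hlo, hhi⟩
    have hx : 0 ≤ x i * 2 ^ k := (Nat.cast_nonneg _).trans hlo
    exact ⟨nonneg_of_mul_nonneg_left hx h2k, (Nat.floor_eq_iff hx).2 ⟨hlo, hhi⟩⟩
  · rintro ⟨hx, hv⟩
    rw [← hv]
    exact ⟨Nat.floor_le (by positivity), Nat.lt_floor_add_one _⟩

lemma pairwise_disjoint_dyadicCube (k : ℕ) :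
    Pairwise (Function.onFun Disjoint (dyadicCube (d := d) k)) := by
  intro v w hvw
  refine Set.disjoint_left.2 fun x hv hw => hvw (funext fun i => ?_)
  exact ((mem_dyadicCube_iff.1 hv i).2).symm.trans (mem_dyadicCube_iff.1 hw i).2

lemma biUnion_dyadicIndices (k : ℕ) :
    ⋃ v ∈ dyadicIndices d k, dyadicCube k v = halfOpenCube 0 1 := by
  have h2k : (0 : ℝ) < 2 ^ k := by positivity
  have hfloor : ∀ {t : ℝ}, 0 ≤ t → (⌊t * 2 ^ k⌋₊ < 2 ^ k ↔ t < 1) := fun ht => by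
    rw [Nat.floor_lt (by positivity)]
    push_cast
    exact mul_lt_iff_lt_one_left h2k
  ext x
  simp only [mem_iUnion, exists_prop, mem_dyadicCube_iff, dyadicIndices, Fintype.mem_piFinset,
    Finset.mem_range]
  change _ ↔ ∀ i, 0 ≤ x i ∧ x i < 0 + 1
  simp only [zero_add]
  constructor
  · rintro ⟨v, hv, hx⟩ i
    exact ⟨(hx i).1, (hfloor (hx i).1).1 ((hx i).2 ▸ hv i)⟩
  · intro hx
    exact ⟨fun i => ⌊x i * 2 ^ k⌋₊, fun i => (hfloor (hx i).1).2 (hx i).2, fun i => ⟨(hx i).1, rfl⟩⟩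

lemma volume_biUnion_dyadicIndices (k : ℕ) :
    volume (⋃ v ∈ dyadicIndices d k, dyadicCube k v) = 1 := by
  simp [biUnion_dyadicIndices, volume_halfOpenCube]

lemma biUnion_filter_dyadicIndices (k : ℕ) (p : (Fin d → ℕ) → Prop) [DecidablePred p] :
    ⋃ v ∈ (dyadicIndices d k).filter p, dyadicCube k v
      = ⋃ (v : Fin d → ℕ) (_ : ∀ i, v i < 2 ^ k) (_ : p v), dyadicCube k v := by
  ext x
  simp only [mem_iUnion, exists_prop, Finset.mem_filter, dyadicIndices, Fintype.mem_piFinset,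
    Finset.mem_range, and_assoc]

end Dyadic

lemma hausdorffContentNM_Icc_le_sum_dyadicCube {n m : ℕ} {M : Type*} [PseudoMetricSpace M]
    (hn : n ≠ 0) (f : (Fin (n + m) → ℝ) → M) (k : ℕ) :
    hausdorffContentNM n m f (Icc 0 1) ≤ ∑ v ∈ dyadicIndices (n + m) k,
      hausdorffContent n (f '' dyadicCube k v) * ENNReal.ofReal (((1 / 2 : ℝ) ^ k) ^ m) := by
  rw [← Finset.tsum_subtype]
  refine hausdorffContentNM_le_tsum hn f _
    (fun (v : dyadicIndices (n + m) k) i => (v.1 i : ℝ) / 2 ^ k) (fun _ => (1 / 2 : ℝ) ^ k) (fun _ => by positivity) (fun v => ?_)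
    (fun v w hvw => pairwise_disjoint_dyadicCube k (Subtype.coe_injective.ne hvw)) ?_
  · exact (subset_biUnion_of_mem (u := dyadicCube k) v.2).trans
      ((biUnion_dyadicIndices k).subset.trans halfOpenCube_subset_Icc)
  · change volume (Icc 0 1 \ ⋃ v : dyadicIndices (n + m) k, dyadicCube k v.1) = 0
    rw [iUnion_subtype, biUnion_dyadicIndices]
    exact volume_Icc_diff_halfOpenCube

section Counting

variable {X ι : Type*} [MeasurableSpace X] (μ : Measure X) {S : Finset ι} {Q : ι → Set X}

lemma measure_biUnion_filter_add_measure_biUnion_filter_not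
    (hQ : ∀ i, MeasurableSet (Q i)) (hdisj : Pairwise (Function.onFun Disjoint Q))
    (p : ι → Prop) [DecidablePred p] :
    μ (⋃ i ∈ S.filter p, Q i) + μ (⋃ i ∈ S.filter (¬ p ·), Q i) = μ (⋃ i ∈ S, Q i) := by
  simp only [measure_biUnion_finset (hdisj.set_pairwise _) fun i _ => hQ i,
    Finset.sum_filter_add_sum_filter_not]

lemma sum_le_mul_measure_biUnion_filter_add_measure_biUnion_filter_not
    (hQ : ∀ i, MeasurableSet (Q i)) (hdisj : Pairwise (Function.onFun Disjoint Q))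
    (p : ι → Prop) [DecidablePred p] {F : ι → ℝ≥0∞} {ε : ℝ≥0∞}
    (hF : ∀ i ∈ S, F i ≤ μ (Q i)) (hFp : ∀ i ∈ S, p i → F i ≤ ε * μ (Q i)) :
    ∑ i ∈ S, F i ≤ ε * μ (⋃ i ∈ S.filter p, Q i) + μ (⋃ i ∈ S.filter (¬ p ·), Q i) := by
  simp only [measure_biUnion_finset (hdisj.set_pairwise _) fun i _ => hQ i]
  rw [Finset.mul_sum, ← Finset.sum_filter_add_sum_filter_not S p]
  gcongr with i hi i hi <;> obtain ⟨hiS, hpi⟩ := Finset.mem_filter.1 hi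
  · exact hFp i hiS hpi
  · exact hF i hiS

end Counting

lemma ENNReal.lt_ofReal_of_add_le_one {a b : ℝ≥0∞} {t : ℝ} (hab : a + b ≤ 1)
    (ha : ENNReal.ofReal (1 - t) < a) : b < ENNReal.ofReal t := by
  have ha_top : a ≠ ∞ := ne_top_of_le_ne_top ENNReal.one_ne_top (le_self_add.trans hab)
  refine (ENNReal.add_lt_add_iff_left ha_top).1 (hab.trans_lt ?_)
  calc (1 : ℝ≥0∞) = ENNReal.ofReal (1 - t + t) := by simp
    _ ≤ ENNReal.ofReal (1 - t) + ENNReal.ofReal t := ENNReal.ofReal_add_le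
    _ < a + ENNReal.ofReal t := ENNReal.add_lt_add_right ENNReal.ofReal_ne_top ha

/-- Counting step (Lemma 5.1): if `f : ℝ^{n+m} → M` is `1`-Lipschitz and for every
`K` there is `k ≤ K` such that the union `U_k` of the dyadic cubes of sidelength
`2^{-k}` in `Q₀ = [0,1]^{n+m}` whose images have small Hausdorff content
(`ℋⁿ_∞(f(Q)) < δ·side(Q)ⁿ`) has Lebesgue measure `> 1 − δ/√n`, then
`ℋ^{n,m}_∞(f, Q₀) ≤ 2δ`. -/
theorem hausdorffContentNM_le_of_many_small_cubes
    {n m : ℕ} {M : Type*} [MetricSpace M]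
    (f : (Fin (n + m) → ℝ) → M) (hf : LipschitzWith 1 f) (δ : ℝ) (hδ : 0 < δ)
    (hU : ∀ K : ℕ, ∃ k ≤ K,
      volume (⋃ (v : Fin (n + m) → ℕ) (_ : ∀ i, v i < 2 ^ k)
          (_ : hausdorffContent n
              (f '' halfOpenCube (fun i => (v i : ℝ) / 2 ^ k) ((1 / 2 : ℝ) ^ k))
            < ENNReal.ofReal (δ * ((1 / 2 : ℝ) ^ k) ^ n)),
          halfOpenCube (fun i => (v i : ℝ) / 2 ^ k) ((1 / 2 : ℝ) ^ k))
        > ENNReal.ofReal (1 - δ / Real.sqrt n)) :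
    hausdorffContentNM n m f (Icc (0 : Fin (n + m) → ℝ) 1)
      ≤ ENNReal.ofReal (2 * δ) := by
  classical
  obtain ⟨k, -, hUk⟩ := hU 0
  set small := fun v : Fin (n + m) → ℕ =>
    hausdorffContent n (f '' dyadicCube k v) < ENNReal.ofReal (δ * ((1 / 2 : ℝ) ^ k) ^ n)
  set S := dyadicIndices (n + m) k
  rw [← biUnion_filter_dyadicIndices k small] at hUk
  have hsplit : volume (⋃ v ∈ S.filter small, dyadicCube k v)
      + volume (⋃ v ∈ S.filter (¬ small ·), dyadicCube k v) = 1 :=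
    (measure_biUnion_filter_add_measure_biUnion_filter_not volume
      (fun v => measurableSet_halfOpenCube _ _) (pairwise_disjoint_dyadicCube k) small).trans
      (volume_biUnion_dyadicIndices k)
  have hbad : volume (⋃ v ∈ S.filter (¬ small ·), dyadicCube k v) < ENNReal.ofReal (δ / √n) :=
    ENNReal.lt_ofReal_of_add_le_one hsplit.le hUk
  have hn : n ≠ 0 := by
    -- `√0 = 0` and `δ / 0 = 0`, so for `n = 0` the bound `hbad` reads `_ < 0`.
    rintro rfl
    simp at hbad
  calc hausdorffContentNM n m f (Icc 0 1)
      ≤ ∑ v ∈ S, hausdorffContent n (f '' dyadicCube k v)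
          * ENNReal.ofReal (((1 / 2 : ℝ) ^ k) ^ m) :=
        hausdorffContentNM_Icc_le_sum_dyadicCube hn f k
    _ ≤ ENNReal.ofReal δ * volume (⋃ v ∈ S.filter small, dyadicCube k v)
          + volume (⋃ v ∈ S.filter (¬ small ·), dyadicCube k v) :=
        sum_le_mul_measure_biUnion_filter_add_measure_biUnion_filter_not volume
          (fun v => measurableSet_halfOpenCube _ _) (pairwise_disjoint_dyadicCube k) small
          (fun v _ => hausdorffContent_image_mul_le_volume hf hn _ (by positivity))
          (fun v _ hv => hausdorffContent_mul_le_mul_volume_of_lt _ (by positivity) hv)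
    _ ≤ ENNReal.ofReal δ * 1 + ENNReal.ofReal δ := by
        gcongr
        · exact le_self_add.trans hsplit.le
        · refine hbad.le.trans (ENNReal.ofReal_le_ofReal (div_le_self hδ.le ?_))
          exact Real.one_le_sqrt.2 (by exact_mod_cast Nat.one_le_iff_ne_zero.2 hn)
    _ = ENNReal.ofReal (2 * δ) := by
        rw [mul_one, ← ENNReal.ofReal_add hδ.le hδ.le, two_mul]
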